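/- Let f(x) = x(3/2 - x/2) for 0 ≤ x ≤ 1/2 and f(x) = x² for 1/2 < x ≤ 1 (i.e., f = f_{a,b} with a = 1/2, b = 1). Then f has a point of prime period 3, i.e., there exists x ∈ [0,1] with f³(x) = x and f(x) ≠ x. -/

import Mathlib

/-! There is a 3-cycle `x ↦ y ↦ z ↦ x` with `x ∈ [0.35, 0.37]` and `x, y ≤ 1/2 < z`: on that
interval two steps along the left branch `t ↦ t (3 - t) / 2` keep `y ≤ 1/2` and push `z` above
`1/2`, so `g^[3] x = (leftBranch (leftBranch x))²`, and this polynomial minus `x` changes sign.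
Since `g` jumps at `1/2`, the intermediate value theorem is applied to the polynomial, not to
`g^[3]`. -/

noncomputable def g (x : ℝ) : ℝ :=
  if x ≤ 1/2 then x * (3/2 - x/2) else x^2

noncomputable def leftBranch (x : ℝ) : ℝ := x * (3 - x) / 2

lemma g_of_le_half {x : ℝ} (hx : x ≤ 1 / 2) : g x = leftBranch x := by
  rw [g, if_pos hx, leftBranch]; ring

lemma g_of_half_lt {x : ℝ} (hx : 1 / 2 < x) : g x = x ^ 2 := by
  rw [g, if_neg hx.not_ge]

@[fun_prop]
lemma continuous_leftBranch : Continuous leftBranch := by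
  unfold leftBranch; fun_prop

lemma leftBranch_monotoneOn : MonotoneOn leftBranch (Set.Icc 0 (3 / 2)) := by
  intro x ⟨hx, _⟩ y ⟨_, hy⟩ hxy
  have : leftBranch y - leftBranch x = (y - x) * (3 - x - y) / 2 := by unfold leftBranch; ring
  nlinarith

lemma leftBranch_ne_self {x : ℝ} (hx₀ : 0 < x) (hx₁ : x < 1) : leftBranch x ≠ x := by
  unfold leftBranch; intro h; nlinarith

lemma leftBranch_mem_Icc {x : ℝ} (hx : x ∈ Set.Icc (0.35 : ℝ) 0.37) :
    leftBranch x ∈ Set.Icc (0.46 : ℝ) 0.49 := by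
  have mono := leftBranch_monotoneOn
  constructor
  · calc (0.46 : ℝ) ≤ leftBranch 0.35 := by norm_num [leftBranch]
      _ ≤ leftBranch x := mono (by norm_num) ⟨by linarith [hx.1], by linarith [hx.2]⟩ hx.1
  · calc leftBranch x ≤ leftBranch 0.37 :=
          mono ⟨by linarith [hx.1], by linarith [hx.2]⟩ (by norm_num) hx.2
      _ ≤ 0.49 := by norm_num [leftBranch]

lemma half_lt_leftBranch {y : ℝ} (hy : y ∈ Set.Icc (0.46 : ℝ) 0.49) : 1 / 2 < leftBranch y :=
  calc (1 / 2 : ℝ) < leftBranch 0.46 := by norm_num [leftBranch]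
    _ ≤ leftBranch y := leftBranch_monotoneOn (by norm_num)
        ⟨by linarith [hy.1], by linarith [hy.2]⟩ hy.1

lemma g_iterate_three_of_mem {x : ℝ} (hx : x ∈ Set.Icc (0.35 : ℝ) 0.37) :
    g^[3] x = leftBranch (leftBranch x) ^ 2 := by
  have hy := leftBranch_mem_Icc hx
  have hgx : g x = leftBranch x := g_of_le_half (by linarith [hx.2])
  have hgy : g (leftBranch x) = leftBranch (leftBranch x) := g_of_le_half (by linarith [hy.2])
  change g (g (g x)) = _
  rw [hgx, hgy, g_of_half_lt (half_lt_leftBranch hy)]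

lemma exists_leftBranch_leftBranch_sq_eq :
    ∃ x ∈ Set.Icc (0.35 : ℝ) 0.37, leftBranch (leftBranch x) ^ 2 = x := by
  have hcont : ContinuousOn (fun x => leftBranch (leftBranch x) ^ 2 - x) (Set.Icc 0.35 0.37) := by
    fun_prop
  have hsign : (0 : ℝ) ∈ Set.Icc (leftBranch (leftBranch 0.35) ^ 2 - 0.35)
      (leftBranch (leftBranch 0.37) ^ 2 - 0.37) := by
    constructor <;> norm_num [leftBranch]
  obtain ⟨x, hx, hx0⟩ := intermediate_value_Icc (by norm_num) hcont hsign
  exact ⟨x, hx, sub_eq_zero.mp hx0⟩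

theorem stmt18 : ∃ x ∈ Set.Icc (0:ℝ) 1, g^[3] x = x ∧ g x ≠ x := by
  obtain ⟨x, hx, hcycle⟩ := exists_leftBranch_leftBranch_sq_eq
  have hx₀ : 0 < x := by linarith [hx.1]
  have hx₁ : x < 1 := by linarith [hx.2]
  refine ⟨x, ⟨hx₀.le, hx₁.le⟩, (g_iterate_three_of_mem hx).trans hcycle, ?_⟩
  rw [g_of_le_half (by linarith [hx.2])]
  exact leftBranch_ne_self hx₀ hx₁
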